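/- Let λ > 0. Then, as the integer M → ∞, ∫₀^∞ x^{−1/2} · M(1−e^{−λx})^{M−1} λ e^{−λx} dx is asymptotically equivalent to √(λ/ln(M)), i.e. the ratio of the two quantities tends to 1. -/

import Mathlib

/-!
Substituting `x ↦ x · log M / λ` turns the ratio into `∫₀^∞ x^{-1/2} p(x) dx`, where `p` is the
density of the maximum of `M` exponentials of rate `log M`. Its distribution function
`(1 - M^{-x})^M` tends to `0` for `x < 1` and to `1` for `x > 1`: the law concentrates at `1`.
For `0 < ε < 1`, the mass in `(1 - ε, 1 + ε]` bounds the integral from below by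
`((1 - M^{-(1+ε)})^M - (1 - M^{-(1-ε)})^M) / √(1 + ε)`. Splitting at `1 - ε` and bounding `p` on
`(0, 1 - ε]` by `M log M (1 - M^{-(1-ε)})^{M-1} ≤ e · M log M · exp(-M^ε)` bounds it from above
by `1 / √(1 - ε) + o(1)`. Letting `M → ∞` and then `ε → 0` gives the limit `1`.
-/

open MeasureTheory Filter Real Set Topology

theorem tendsto_of_eventually_sandwich {ι α β : Type*} [TopologicalSpace β] [LinearOrder β]
    [OrderTopology β] {p : Filter ι} [p.NeBot] {l : Filter α} {u : α → β} {lo hi : ι → β} {c : β}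
    (hlo : Tendsto lo p (𝓝 c)) (hhi : Tendsto hi p (𝓝 c))
    (h : ∀ᶠ i in p, ∃ v w : α → β, Tendsto v l (𝓝 (lo i)) ∧ Tendsto w l (𝓝 (hi i)) ∧
      ∀ᶠ x in l, v x ≤ u x ∧ u x ≤ w x) :
    Tendsto u l (𝓝 c) := by
  refine tendsto_order.2 ⟨fun a ha => ?_, fun b hb => ?_⟩
  · obtain ⟨i, hai, v, w, hv, -, hvw⟩ := ((hlo.eventually (lt_mem_nhds ha)).and h).exists
    filter_upwards [hv.eventually (lt_mem_nhds hai), hvw] with x hav hvuw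
    exact hav.trans_le hvuw.1
  · obtain ⟨i, hib, v, w, -, hw, hvw⟩ := ((hhi.eventually (gt_mem_nhds hb)).and h).exists
    filter_upwards [hw.eventually (gt_mem_nhds hib), hvw] with x hwb hvuw
    exact hvuw.2.trans_lt hwb

lemma inv_sqrt_eq_rpow {x : ℝ} (hx : 0 ≤ x) : 1 / √x = x ^ (-(1 / 2) : ℝ) := by
  rw [rpow_neg hx, sqrt_eq_rpow, one_div]

lemma integrableOn_inv_sqrt_Ioc {a : ℝ} (ha : 0 ≤ a) :
    IntegrableOn (fun x => 1 / √x) (Ioc 0 a) := by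
  have h := intervalIntegral.intervalIntegrable_rpow' (a := 0) (b := a)
    (by norm_num : -1 < -(1 / 2 : ℝ))
  rw [intervalIntegrable_iff_integrableOn_Ioc_of_le ha] at h
  exact h.congr_fun (fun x hx => (inv_sqrt_eq_rpow hx.1.le).symm) measurableSet_Ioc

lemma integral_inv_sqrt_Ioc {a : ℝ} (ha : 0 ≤ a) : ∫ x in Ioc 0 a, 1 / √x = 2 * √a := by
  rw [setIntegral_congr_fun measurableSet_Ioc (fun x hx => inv_sqrt_eq_rpow hx.1.le),
    ← intervalIntegral.integral_of_le ha, integral_rpow (Or.inl (by norm_num)),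
    zero_rpow (by norm_num), sqrt_eq_rpow]
  norm_num
  ring

section InvSqrtWeight

variable {f : ℝ → ℝ} {a C : ℝ}

lemma integrableOn_inv_sqrt_mul (ha : 0 < a) (hf : IntegrableOn f (Ioi 0))
    (hC : ∀ x ∈ Ioc 0 a, ‖f x‖ ≤ C) : IntegrableOn (fun x => 1 / √x * f x) (Ioi 0) := by
  rw [← Ioc_union_Ioi_eq_Ioi ha.le]
  refine IntegrableOn.union ?_ ?_
  · refine (integrableOn_inv_sqrt_Ioc ha.le).mul_bdd (c := C)
      (hf.mono_set Ioc_subset_Ioi_self).aestronglyMeasurable ?_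
    exact (ae_restrict_iff' measurableSet_Ioc).2 (Eventually.of_forall hC)
  · refine (hf.mono_set (Ioi_subset_Ioi ha.le)).bdd_mul (c := 1 / √a)
      (Measurable.aestronglyMeasurable (by fun_prop))
      ((ae_restrict_iff' measurableSet_Ioi).2 (Eventually.of_forall fun x hx => ?_))
    rw [norm_of_nonneg (by positivity)]
    exact one_div_le_one_div_of_le (sqrt_pos.2 ha) (sqrt_le_sqrt (le_of_lt hx))

lemma setIntegral_inv_sqrt_mul_le (ha : 0 < a) (hf0 : ∀ x ∈ Ioi 0, 0 ≤ f x)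
    (hf : IntegrableOn f (Ioi 0)) (hC : ∀ x ∈ Ioc 0 a, f x ≤ C) :
    ∫ x in Ioi 0, 1 / √x * f x ≤ 2 * √a * C + (∫ x in Ioi 0, f x) / √a := by
  have hint := integrableOn_inv_sqrt_mul ha hf fun x hx => by
    rw [norm_of_nonneg (hf0 x hx.1)]; exact hC x hx
  have hsplit : ∫ x in Ioi 0, 1 / √x * f x =
      (∫ x in Ioc 0 a, 1 / √x * f x) + ∫ x in Ioi a, 1 / √x * f x := by
    rw [← setIntegral_union (Ioc_disjoint_Ioi le_rfl) measurableSet_Ioi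
      (hint.mono_set Ioc_subset_Ioi_self) (hint.mono_set (Ioi_subset_Ioi ha.le)),
      Ioc_union_Ioi_eq_Ioi ha.le]
  rw [hsplit]
  gcongr
  · calc ∫ x in Ioc 0 a, 1 / √x * f x ≤ ∫ x in Ioc 0 a, C * (1 / √x) := by
          refine setIntegral_mono_on (hint.mono_set Ioc_subset_Ioi_self)
            ((integrableOn_inv_sqrt_Ioc ha.le).const_mul C) measurableSet_Ioc fun x hx => ?_
          rw [mul_comm]
          exact mul_le_mul_of_nonneg_right (hC x hx) (by positivity)
      _ = 2 * √a * C := by rw [integral_const_mul, integral_inv_sqrt_Ioc ha.le]; ring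
  · calc ∫ x in Ioi a, 1 / √x * f x ≤ ∫ x in Ioi a, 1 / √a * f x := by
          refine setIntegral_mono_on (hint.mono_set (Ioi_subset_Ioi ha.le))
            ((hf.mono_set (Ioi_subset_Ioi ha.le)).const_mul _) measurableSet_Ioi fun x hx => ?_
          exact mul_le_mul_of_nonneg_right
            (one_div_le_one_div_of_le (sqrt_pos.2 ha) (sqrt_le_sqrt (le_of_lt hx)))
            (hf0 x (ha.trans hx))
      _ ≤ 1 / √a * ∫ x in Ioi 0, f x := by
          rw [integral_const_mul]
          gcongr
          exact (ae_restrict_iff' measurableSet_Ioi).2 (Eventually.of_forall hf0)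
      _ = (∫ x in Ioi 0, f x) / √a := by ring

lemma le_setIntegral_inv_sqrt_mul {b : ℝ} (ha : 0 < a) (hf0 : ∀ x ∈ Ioi 0, 0 ≤ f x)
    (hf : IntegrableOn f (Ioc a b)) (hint : IntegrableOn (fun x => 1 / √x * f x) (Ioi 0)) :
    (∫ x in Ioc a b, f x) / √b ≤ ∫ x in Ioi 0, 1 / √x * f x := by
  have hsub : Ioc a b ⊆ Ioi 0 := fun x hx => ha.trans hx.1
  calc (∫ x in Ioc a b, f x) / √b = ∫ x in Ioc a b, 1 / √b * f x := by
        rw [integral_const_mul]; ring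
    _ ≤ ∫ x in Ioc a b, 1 / √x * f x := by
        refine setIntegral_mono_on (hf.const_mul _) (hint.mono_set hsub) measurableSet_Ioc
          fun x hx => ?_
        exact mul_le_mul_of_nonneg_right
          (one_div_le_one_div_of_le (sqrt_pos.2 (ha.trans hx.1)) (sqrt_le_sqrt hx.2))
          (hf0 x (hsub hx))
    _ ≤ ∫ x in Ioi 0, 1 / √x * f x := by
        refine setIntegral_mono_set hint ?_ hsub.eventuallyLE
        exact (ae_restrict_iff' measurableSet_Ioi).2 (Eventually.of_forall fun x hx =>
          mul_nonneg (by positivity) (hf0 x hx))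

end InvSqrtWeight

noncomputable def maxExpCDF (lam : ℝ) (M : ℕ) (x : ℝ) : ℝ := (1 - exp (-lam * x)) ^ M

noncomputable def maxExpDensity (lam : ℝ) (M : ℕ) (x : ℝ) : ℝ :=
  M * (1 - exp (-lam * x)) ^ (M - 1) * (lam * exp (-lam * x))

section MaxExp

variable {lam : ℝ} {M : ℕ}

lemma hasDerivAt_maxExpCDF (lam : ℝ) (M : ℕ) (x : ℝ) :
    HasDerivAt (maxExpCDF lam M) (maxExpDensity lam M x) x := by
  have h : HasDerivAt (fun y => 1 - exp (-lam * y)) (lam * exp (-lam * x)) x := by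
    simpa [mul_comm] using ((hasDerivAt_id x).const_mul (-lam)).exp.const_sub 1
  unfold maxExpCDF maxExpDensity
  simpa [mul_assoc] using h.fun_pow M

lemma tendsto_maxExpCDF_atTop (hlam : 0 < lam) (M : ℕ) :
    Tendsto (maxExpCDF lam M) atTop (𝓝 1) := by
  have h : Tendsto (fun x => -lam * x) atTop atBot :=
    tendsto_id.const_mul_atTop_of_neg (neg_neg_of_pos hlam)
  unfold maxExpCDF
  simpa using ((tendsto_exp_atBot.comp h).const_sub 1).pow M

lemma maxExpDensity_nonneg (hlam : 0 ≤ lam) {x : ℝ} (hx : 0 ≤ x) : 0 ≤ maxExpDensity lam M x := by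
  have : exp (-lam * x) ≤ 1 := exp_le_one_iff.2 (by nlinarith)
  have : 0 ≤ 1 - exp (-lam * x) := by linarith
  unfold maxExpDensity
  positivity

lemma maxExpDensity_le (hlam : 0 ≤ lam) {a x : ℝ} (hx : 0 ≤ x) (hxa : x ≤ a) :
    maxExpDensity lam M x ≤ M * lam * (1 - exp (-lam * a)) ^ (M - 1) := by
  have hexp : exp (-lam * a) ≤ exp (-lam * x) := exp_le_exp.2 (by nlinarith)
  have hexp1 : exp (-lam * x) ≤ 1 := exp_le_one_iff.2 (by nlinarith)
  calc maxExpDensity lam M x ≤ M * (1 - exp (-lam * a)) ^ (M - 1) * (lam * 1) := by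
        unfold maxExpDensity
        gcongr
        exact mul_nonneg M.cast_nonneg (pow_nonneg (by linarith) _)
    _ = M * lam * (1 - exp (-lam * a)) ^ (M - 1) := by ring

lemma integrableOn_maxExpDensity (hlam : 0 < lam) (M : ℕ) :
    IntegrableOn (maxExpDensity lam M) (Ioi 0) :=
  integrableOn_Ioi_deriv_of_nonneg' (fun x _ => hasDerivAt_maxExpCDF lam M x)
    (fun _ hx => maxExpDensity_nonneg hlam.le (le_of_lt hx)) (tendsto_maxExpCDF_atTop hlam M)

lemma integral_maxExpDensity (hlam : 0 < lam) (hM : M ≠ 0) :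
    ∫ x in Ioi 0, maxExpDensity lam M x = 1 := by
  rw [integral_Ioi_of_hasDerivAt_of_nonneg' (fun x _ => hasDerivAt_maxExpCDF lam M x)
    (fun _ hx => maxExpDensity_nonneg hlam.le (le_of_lt hx)) (tendsto_maxExpCDF_atTop hlam M)]
  simp [maxExpCDF, hM]

lemma integral_Ioc_maxExpDensity {a b : ℝ} (hab : a ≤ b) :
    ∫ x in Ioc a b, maxExpDensity lam M x = maxExpCDF lam M b - maxExpCDF lam M a := by
  have hcont : Continuous (maxExpDensity lam M) := by unfold maxExpDensity; fun_prop
  rw [← intervalIntegral.integral_of_le hab]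
  exact intervalIntegral.integral_eq_sub_of_hasDerivAt (fun x _ => hasDerivAt_maxExpCDF lam M x)
    (hcont.intervalIntegrable a b)

lemma integrableOn_inv_sqrt_mul_maxExpDensity (hlam : 0 < lam) (M : ℕ) :
    IntegrableOn (fun x => 1 / √x * maxExpDensity lam M x) (Ioi 0) :=
  integrableOn_inv_sqrt_mul one_pos (integrableOn_maxExpDensity hlam M) fun x hx => by
    rw [norm_of_nonneg (maxExpDensity_nonneg hlam.le hx.1.le)]
    exact maxExpDensity_le hlam.le hx.1.le hx.2

lemma integral_inv_sqrt_mul_maxExpDensity_le (hlam : 0 < lam) (hM : M ≠ 0) {a : ℝ} (ha : 0 < a) :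
    ∫ x in Ioi 0, 1 / √x * maxExpDensity lam M x ≤
      2 * √a * (M * lam * (1 - exp (-lam * a)) ^ (M - 1)) + 1 / √a := by
  simpa [integral_maxExpDensity hlam hM] using setIntegral_inv_sqrt_mul_le ha
    (fun x hx => maxExpDensity_nonneg hlam.le (le_of_lt hx)) (integrableOn_maxExpDensity hlam M)
    (fun x hx => maxExpDensity_le hlam.le hx.1.le hx.2)

lemma le_integral_inv_sqrt_mul_maxExpDensity (hlam : 0 < lam) {a b : ℝ} (ha : 0 < a) (hab : a ≤ b) :
    (maxExpCDF lam M b - maxExpCDF lam M a) / √b ≤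
      ∫ x in Ioi 0, 1 / √x * maxExpDensity lam M x := by
  rw [← integral_Ioc_maxExpDensity hab]
  exact le_setIntegral_inv_sqrt_mul ha (fun x hx => maxExpDensity_nonneg hlam.le (le_of_lt hx))
    ((integrableOn_maxExpDensity hlam M).mono_set fun x hx => ha.trans hx.1)
    (integrableOn_inv_sqrt_mul_maxExpDensity hlam M)

lemma integral_inv_sqrt_mul_maxExpDensity_eq {mu : ℝ} (hlam : 0 < lam) (hmu : 0 < mu) :
    ∫ x in Ioi 0, 1 / √x * maxExpDensity lam M x =
      √(lam / mu) * ∫ x in Ioi 0, 1 / √x * maxExpDensity mu M x := by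
  set κ := mu / lam with hκ_def
  have hκ : 0 < κ := div_pos hmu hlam
  have hlamκ : lam * κ = mu := by rw [hκ_def]; field_simp
  have hdens (x : ℝ) : κ * maxExpDensity lam M (κ * x) = maxExpDensity mu M x := by
    simp only [maxExpDensity, ← mul_assoc, neg_mul, hlamκ]
    rw [← hlamκ]
    ring
  have hcomp := integral_comp_mul_left_Ioi (fun x => 1 / √x * maxExpDensity lam M x) 0 hκ
  have hinteg (x : ℝ) : 1 / √(κ * x) * maxExpDensity lam M (κ * x) =
      κ⁻¹ * (√κ)⁻¹ * (1 / √x * maxExpDensity mu M x) := by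
    rw [← hdens, sqrt_mul hκ.le]
    field_simp
  simp only [hinteg, integral_const_mul, mul_zero, smul_eq_mul] at hcomp
  rw [show √(lam / mu) = (√κ)⁻¹ by rw [hκ_def, ← sqrt_inv, inv_div]]
  exact mul_left_cancel₀ (inv_ne_zero hκ.ne') (hcomp.symm.trans (mul_assoc _ _ _))

end MaxExp

lemma one_sub_pow_le_exp_neg_mul {δ : ℝ} (hδ : δ ≤ 1) (n : ℕ) : (1 - δ) ^ n ≤ exp (-(n * δ)) := by
  rw [← mul_neg, exp_nat_mul]
  exact pow_le_pow_left₀ (by linarith) (by linarith [add_one_le_exp (-δ)]) n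

lemma one_sub_rpow_neg_pow_pred_le {c : ℝ} (hc : 0 ≤ c) {M : ℕ} (hM : 1 ≤ M) :
    (1 - (M : ℝ) ^ (-c)) ^ (M - 1) ≤ exp (1 - (M : ℝ) ^ (1 - c)) := by
  have hM' : (1 : ℝ) ≤ M := by exact_mod_cast hM
  have hδ1 : (M : ℝ) ^ (-c) ≤ 1 := rpow_le_one_of_one_le_of_nonpos hM' (by linarith)
  have hMδ : (M : ℝ) ^ (1 - c) = (M : ℝ) ^ (-c) * M := by
    rw [sub_eq_neg_add, rpow_add_one (by positivity)]
  refine (one_sub_pow_le_exp_neg_mul hδ1 _).trans (exp_le_exp.2 ?_)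
  rw [Nat.cast_sub hM, Nat.cast_one, hMδ]
  nlinarith

lemma tendsto_one_sub_rpow_neg_pow_of_one_lt {c : ℝ} (hc : 1 < c) :
    Tendsto (fun M : ℕ => (1 - (M : ℝ) ^ (-c)) ^ M) atTop (𝓝 1) := by
  have hlow : Tendsto (fun M : ℕ => 1 - (M : ℝ) ^ (1 - c)) atTop (𝓝 1) := by
    simpa using tendsto_const_nhds.sub
      ((tendsto_rpow_neg_atTop (by linarith : 0 < c - 1)).comp tendsto_natCast_atTop_atTop)
  have hbounds : ∀ᶠ M : ℕ in atTop,
      1 - (M : ℝ) ^ (1 - c) ≤ (1 - (M : ℝ) ^ (-c)) ^ M ∧ (1 - (M : ℝ) ^ (-c)) ^ M ≤ 1 := by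
    filter_upwards [eventually_ge_atTop 1] with M hM
    have hδ1 : (M : ℝ) ^ (-c) ≤ 1 :=
      rpow_le_one_of_one_le_of_nonpos (by exact_mod_cast hM) (by linarith)
    have hMδ : (M : ℝ) ^ (1 - c) = M * (M : ℝ) ^ (-c) := by
      rw [sub_eq_neg_add, rpow_add_one (by positivity), mul_comm]
    refine ⟨?_, pow_le_one₀ (sub_nonneg.2 hδ1) (by simp [rpow_nonneg])⟩
    have h := one_add_mul_le_pow (a := -(M : ℝ) ^ (-c)) (by linarith) M
    rwa [mul_neg, ← sub_eq_add_neg, ← sub_eq_add_neg, ← hMδ] at h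
  exact tendsto_of_tendsto_of_tendsto_of_le_of_le' hlow tendsto_const_nhds
    (hbounds.mono fun _ h => h.1) (hbounds.mono fun _ h => h.2)

lemma tendsto_exp_one_sub_rpow_atTop {s : ℝ} (hs : 0 < s) :
    Tendsto (fun M : ℕ => exp (1 - (M : ℝ) ^ s)) atTop (𝓝 0) := by
  refine tendsto_exp_atBot.comp (tendsto_atBot_add_const_left _ 1 ?_)
  exact tendsto_neg_atTop_atBot.comp ((tendsto_rpow_atTop hs).comp tendsto_natCast_atTop_atTop)

lemma tendsto_one_sub_rpow_neg_pow_of_lt_one {c : ℝ} (hc0 : 0 ≤ c) (hc1 : c < 1) :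
    Tendsto (fun M : ℕ => (1 - (M : ℝ) ^ (-c)) ^ M) atTop (𝓝 0) := by
  have hbounds : ∀ᶠ M : ℕ in atTop, 0 ≤ (1 - (M : ℝ) ^ (-c)) ^ M ∧
      (1 - (M : ℝ) ^ (-c)) ^ M ≤ exp (1 - (M : ℝ) ^ (1 - c)) := by
    filter_upwards [eventually_ge_atTop 1] with M hM
    have hδ1 : (M : ℝ) ^ (-c) ≤ 1 :=
      rpow_le_one_of_one_le_of_nonpos (by exact_mod_cast hM) (by linarith)
    refine ⟨pow_nonneg (by linarith) M, ?_⟩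
    exact (pow_le_pow_of_le_one (by linarith) (by simp [rpow_nonneg]) (Nat.sub_le M 1)).trans
      (one_sub_rpow_neg_pow_pred_le hc0 hM)
  exact squeeze_zero' (hbounds.mono fun _ h => h.1) (hbounds.mono fun _ h => h.2)
    (tendsto_exp_one_sub_rpow_atTop (sub_pos.2 hc1))

lemma tendsto_mul_log_mul_exp_neg_rpow {s : ℝ} (hs : 0 < s) :
    Tendsto (fun x : ℝ => x * log x * exp (-x ^ s)) atTop (𝓝 0) := by
  have h := (tendsto_rpow_mul_exp_neg_mul_atTop_nhds_zero (2 / s) 1 one_pos).comp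
    (tendsto_rpow_atTop hs)
  have hbounds : ∀ᶠ x : ℝ in atTop, 0 ≤ x * log x * exp (-x ^ s) ∧
      x * log x * exp (-x ^ s) ≤ (x ^ s) ^ (2 / s) * exp (-1 * x ^ s) := by
    filter_upwards [eventually_ge_atTop 1] with x hx
    have hL := log_nonneg hx
    have hlog : log x ≤ x := (log_le_sub_one_of_pos (by linarith)).trans (by linarith)
    rw [← rpow_mul (by linarith), mul_div_cancel₀ _ hs.ne', rpow_two, neg_one_mul]
    refine ⟨by positivity, ?_⟩
    gcongr
    nlinarith
  exact squeeze_zero' (hbounds.mono fun _ h => h.1) (hbounds.mono fun _ h => h.2) h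

lemma tendsto_mul_log_mul_one_sub_rpow_neg_pow_pred {c : ℝ} (hc0 : 0 ≤ c) (hc1 : c < 1) :
    Tendsto (fun M : ℕ => M * log M * (1 - (M : ℝ) ^ (-c)) ^ (M - 1)) atTop (𝓝 0) := by
  have h := ((tendsto_mul_log_mul_exp_neg_rpow (sub_pos.2 hc1)).comp
    tendsto_natCast_atTop_atTop).const_mul (exp 1)
  rw [mul_zero] at h
  have hbounds : ∀ᶠ M : ℕ in atTop, 0 ≤ M * log M * (1 - (M : ℝ) ^ (-c)) ^ (M - 1) ∧
      M * log M * (1 - (M : ℝ) ^ (-c)) ^ (M - 1) ≤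
        exp 1 * (M * log M * exp (-(M : ℝ) ^ (1 - c))) := by
    filter_upwards [eventually_ge_atTop 1] with M hM
    have hM' : (1 : ℝ) ≤ M := by exact_mod_cast hM
    have hL := log_nonneg hM'
    have hδ : 0 ≤ 1 - (M : ℝ) ^ (-c) :=
      sub_nonneg.2 (rpow_le_one_of_one_le_of_nonpos hM' (by linarith))
    refine ⟨by positivity, ?_⟩
    calc (M : ℝ) * log M * (1 - (M : ℝ) ^ (-c)) ^ (M - 1)
        ≤ M * log M * exp (1 - (M : ℝ) ^ (1 - c)) := by
          gcongr
          exact one_sub_rpow_neg_pow_pred_le hc0 hM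
      _ = exp 1 * (M * log M * exp (-(M : ℝ) ^ (1 - c))) := by
          rw [sub_eq_add_neg, exp_add]; ring
  exact squeeze_zero' (hbounds.mono fun _ h => h.1) (hbounds.mono fun _ h => h.2) h

lemma exp_neg_log_mul {m : ℝ} (hm : 0 < m) (t : ℝ) : exp (-log m * t) = m ^ (-t) := by
  rw [rpow_def_of_pos hm, neg_mul, mul_neg]

theorem tendsto_integral_inv_sqrt_mul_maxExpDensity_log :
    Tendsto (fun M : ℕ => ∫ x in Ioi 0, 1 / √x * maxExpDensity (log M) M x) atTop (𝓝 1) := by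
  have hlo : Tendsto (fun ε : ℝ => 1 / √(1 + ε)) (𝓝[>] 0) (𝓝 1) := by
    have : ContinuousAt (fun ε : ℝ => 1 / √(1 + ε)) 0 := by fun_prop (disch := simp)
    simpa using this.tendsto.mono_left nhdsWithin_le_nhds
  have hhi : Tendsto (fun ε : ℝ => 1 / √(1 - ε)) (𝓝[>] 0) (𝓝 1) := by
    have : ContinuousAt (fun ε : ℝ => 1 / √(1 - ε)) 0 := by fun_prop (disch := simp)
    simpa using this.tendsto.mono_left nhdsWithin_le_nhds
  refine tendsto_of_eventually_sandwich hlo hhi ?_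
  filter_upwards [Ioo_mem_nhdsGT one_pos] with ε ⟨hε0, hε1⟩
  refine ⟨fun M : ℕ =>
      ((1 - (M : ℝ) ^ (-(1 + ε))) ^ M - (1 - (M : ℝ) ^ (-(1 - ε))) ^ M) / √(1 + ε),
    fun M : ℕ =>
      2 * √(1 - ε) * (M * log M * (1 - (M : ℝ) ^ (-(1 - ε))) ^ (M - 1)) + 1 / √(1 - ε),
    ?_, ?_, ?_⟩
  · simpa using ((tendsto_one_sub_rpow_neg_pow_of_one_lt (by linarith : 1 < 1 + ε)).sub
      (tendsto_one_sub_rpow_neg_pow_of_lt_one (by linarith : 0 ≤ 1 - ε) (by linarith))).div_const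
      (√(1 + ε))
  · simpa using ((tendsto_mul_log_mul_one_sub_rpow_neg_pow_pred (by linarith : 0 ≤ 1 - ε)
      (by linarith)).const_mul (2 * √(1 - ε))).add_const (1 / √(1 - ε))
  · filter_upwards [eventually_gt_atTop 1] with M hM
    have hM' : (0 : ℝ) < M := by positivity
    have hL : 0 < log M := log_pos (by exact_mod_cast hM)
    constructor
    · simpa only [maxExpCDF, exp_neg_log_mul hM'] using
        le_integral_inv_sqrt_mul_maxExpDensity (M := M) hL (by linarith : 0 < 1 - ε)
          (by linarith : 1 - ε ≤ 1 + ε)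
    · simpa only [exp_neg_log_mul hM'] using
        integral_inv_sqrt_mul_maxExpDensity_le hL (by omega : M ≠ 0) (by linarith : 0 < 1 - ε)

/-- `E[g_max^{-1/2}] ~ √(λ/ln M)` as `M → ∞`, where `g_max` is the maximum of
`M` i.i.d. exponential(λ) random variables, with density
`p_M(x) = M(1-e^{-λx})^{M-1} λe^{-λx}`. -/
theorem gmax_inv_sqrt_asymptotics (lam : ℝ) (hlam : 0 < lam) :
    Tendsto (fun M : ℕ =>
        (∫ x in Set.Ioi (0:ℝ),
            (1 / Real.sqrt x) * ((M : ℝ) * (1 - Real.exp (-lam * x)) ^ (M - 1)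
              * (lam * Real.exp (-lam * x)))) /
          Real.sqrt (lam / Real.log M)) atTop (nhds 1) := by
  refine tendsto_integral_inv_sqrt_mul_maxExpDensity_log.congr' ?_
  filter_upwards [eventually_gt_atTop 1] with M hM
  have hL : 0 < log M := log_pos (by exact_mod_cast hM)
  change _ = (∫ x in Ioi 0, 1 / √x * maxExpDensity lam M x) / √(lam / log M)
  rw [integral_inv_sqrt_mul_maxExpDensity_eq hlam hL, mul_div_cancel_left₀]
  positivity
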